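/- arXiv:1610.08923 — 2 statements merged into one kernel-verified Lean document; each statement's English description precedes it below -/
import Mathlib

section
/- Let A ∈ M_{m,n}(r,c) be a matrix with ds(A) = ε. Then: (1) if A is column normalized and all R_i(A) are nonsingular (so Row(A) is defined), then cap(Row(A)) ≥ cap(A); (2) if A is row normalized and all C_j(A) are nonsingular (so Col(A) is defined), then cap(Col(A)) ≥ min{ e^{1/6}, e^{ε/6} } · cap(A). -/
open Matrix BigOperators
open scoped ComplexOrder

noncomputable section

/-- The capacity of a block matrix `A ∈ M_{m,n}(r,c)`. -/
def cap {m n r c : ℕ} (A : Fin m → Fin n → Matrix (Fin r) (Fin c) ℂ) : ℝ :=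
  sInf { z : ℝ | ∃ X : Fin m → Matrix (Fin r) (Fin r) ℂ,
    (∀ i, (X i).PosDef) ∧ (∏ i, (X i).det) = 1 ∧
    z = ∏ j, ((((n : ℂ) * c / ((m : ℂ) * r)) • ∑ i, (A i j)ᴴ * X i * A i j).det).re }

/-- The `i`-th row sum `R_i(A) = Σ_j A_{ij} A_{ij}*`. -/
def RowSum {m n r c : ℕ} (A : Fin m → Fin n → Matrix (Fin r) (Fin c) ℂ) (i : Fin m) :
    Matrix (Fin r) (Fin r) ℂ := ∑ j, A i j * (A i j)ᴴ

/-- The `j`-th column sum `C_j(A) = (nc/mr) Σ_i A_{ij}* A_{ij}`. -/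
def ColSum {m n r c : ℕ} (A : Fin m → Fin n → Matrix (Fin r) (Fin c) ℂ) (j : Fin n) :
    Matrix (Fin c) (Fin c) ℂ := ((n : ℂ) * c / ((m : ℂ) * r)) • ∑ i, (A i j)ᴴ * A i j

/-- `‖M‖₂² = tr (M M*)` for a square complex matrix. -/
def sqNorm {k : ℕ} (M : Matrix (Fin k) (Fin k) ℂ) : ℝ := ((M * Mᴴ).trace).re

/-- Distance of `A` to being doubly stochastic. -/
def dsDist {m n r c : ℕ} (A : Fin m → Fin n → Matrix (Fin r) (Fin c) ℂ) : ℝ :=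
  ∑ j, sqNorm (ColSum A j - 1) + ∑ i, sqNorm (RowSum A i - 1)

/-- `B` is a scaling of `A`: `B_{ij} = R_i A_{ij} C_j` with nonsingular coefficients. -/
def IsScaling {m n r c : ℕ} (A B : Fin m → Fin n → Matrix (Fin r) (Fin c) ℂ) : Prop :=
  ∃ (R : Fin m → Matrix (Fin r) (Fin r) ℂ) (C : Fin n → Matrix (Fin c) (Fin c) ℂ),
    (∀ i, (R i).det ≠ 0) ∧ (∀ j, (C j).det ≠ 0) ∧
    ∀ i j, B i j = R i * A i j * C j

/-- `A` is scalable if it has scalings arbitrarily close to doubly stochastic. -/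
def Scalable {m n r c : ℕ} (A : Fin m → Fin n → Matrix (Fin r) (Fin c) ℂ) : Prop :=
  ∀ ε : ℝ, 0 < ε → ∃ B, IsScaling A B ∧ dsDist B ≤ ε

/-! Row and column normalization are scalings, and scalings multiply the capacity by a
determinant factor: `cap (A U) ≥ (∏ⱼ |det Uⱼ|²) cap A`, and
`cap (T A) ≥ (∏ᵢ |det Tᵢ|²)^(nc/mr) cap A` (rescale `Tᵢᴴ Xᵢ Tᵢ` to restore `∏ det = 1`).
For `Row` and `Col` the factors are `(∏ det Rᵢ)^(-nc/mr)` and `(∏ det Cⱼ)⁻¹`. Normalization of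
the other side fixes the total trace of the `Rᵢ` (resp. `Cⱼ`) to `mr` (resp. `nc`), and the
scalar bound `x ≤ exp (x - 1 - min 1 ((x - 1)²) / 6)` applied to all their eigenvalues gives
`∏ det Rᵢ ≤ 1` and `∏ det Cⱼ ≤ exp (-min 1 ε / 6)`. -/

lemma le_exp_sub_one_sub_min_sq_div_six {x : ℝ} (hx : 0 ≤ x) :
    x ≤ Real.exp (x - 1 - min 1 ((x - 1) ^ 2) / 6) := by
  rcases hx.eq_or_lt with rfl | hx
  · positivity
  rw [← Real.log_le_iff_le_exp hx]
  rcases le_or_gt 2 x with h2 | h2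
  · have hlog : Real.log (x / 2) ≤ x / 2 - 1 := Real.log_le_sub_one_of_pos (by positivity)
    rw [Real.log_div hx.ne' two_ne_zero] at hlog
    rw [min_eq_left (by nlinarith)]
    linarith [Real.log_two_lt_d9]
  · -- `log (s ^ 2) = 2 log s ≤ 2 (s - 1)` turns the claim into a polynomial inequality in `s`
    obtain ⟨s, hs, rfl⟩ : ∃ s, 0 < s ∧ s ^ 2 = x := ⟨√x, by positivity, Real.sq_sqrt hx.le⟩
    have hlog : Real.log s ≤ s - 1 := Real.log_le_sub_one_of_pos hs
    have hs_le : s ≤ 17 / 12 := by nlinarith [sq_nonneg (2 * s - 3)]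
    rw [min_eq_right (by nlinarith), Real.log_pow]
    nlinarith [mul_nonneg (sq_nonneg (s - 1)) (by nlinarith : (0 : ℝ) ≤ 6 - (s + 1) ^ 2)]

lemma min_one_sum_le_sum_min_one {ι : Type*} [Fintype ι] {f : ι → ℝ} (hf : ∀ i, 0 ≤ f i) :
    min 1 (∑ i, f i) ≤ ∑ i, min 1 (f i) := by
  by_cases h : ∀ i, f i ≤ 1
  · simp only [min_eq_right (h _)]
    exact min_le_right _ _
  · push Not at h
    obtain ⟨i, hi⟩ := h
    calc min 1 (∑ i, f i) ≤ min 1 (f i) := by rw [min_eq_left hi.le]; exact min_le_left _ _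
      _ ≤ ∑ j, min 1 (f j) :=
        Finset.single_le_sum (fun j _ => le_min zero_le_one (hf j)) (Finset.mem_univ i)

lemma prod_le_exp_neg_min_one_sum_sq {ι : Type*} [Fintype ι] {g : ι → ℝ} (hg : ∀ i, 0 ≤ g i)
    (hsum : ∑ i, g i = Fintype.card ι) :
    ∏ i, g i ≤ Real.exp (-(min 1 (∑ i, (g i - 1) ^ 2) / 6)) := by
  have hexponent : ∑ i, (g i - 1 - min 1 ((g i - 1) ^ 2) / 6)
      = -((∑ i, min 1 ((g i - 1) ^ 2)) / 6) := by
    simp [Finset.sum_sub_distrib, hsum, Finset.sum_div]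
  calc ∏ i, g i ≤ ∏ i, Real.exp (g i - 1 - min 1 ((g i - 1) ^ 2) / 6) :=
        Finset.prod_le_prod (fun i _ => hg i) fun i _ => le_exp_sub_one_sub_min_sq_div_six (hg i)
    _ = Real.exp (-((∑ i, min 1 ((g i - 1) ^ 2)) / 6)) := by rw [← Real.exp_sum, hexponent]
    _ ≤ _ := by
        gcongr
        exact min_one_sum_le_sum_min_one fun i => sq_nonneg _

lemma sqNorm_nonneg {k : ℕ} (M : Matrix (Fin k) (Fin k) ℂ) : 0 ≤ sqNorm M :=
  (Complex.nonneg_iff.mp (posSemidef_self_mul_conjTranspose M).trace_nonneg).1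

lemma Matrix.IsHermitian.sqNorm_sub_one_eq_sum_eigenvalues {k : ℕ} {P : Matrix (Fin k) (Fin k) ℂ}
    (hP : P.IsHermitian) : sqNorm (P - 1) = ∑ i, (hP.eigenvalues i - 1) ^ 2 := by
  set φ := Unitary.conjStarAlgAut ℂ (Matrix (Fin k) (Fin k) ℂ) hP.eigenvectorUnitary
  have hconj :
      (P - 1) * (P - 1)ᴴ = φ (diagonal fun i => (((hP.eigenvalues i - 1) ^ 2 : ℝ) : ℂ)) := by
    conv_lhs => rw [hP.spectral_theorem]
    rw [← map_one φ, ← map_sub, ← star_eq_conjTranspose, ← map_star, ← map_mul, ← diagonal_one,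
      diagonal_sub, star_eq_conjTranspose, diagonal_conjTranspose, diagonal_mul_diagonal]
    congr 2 with i
    simp [sq]
  rw [sqNorm, hconj, Unitary.conjStarAlgAut_apply, trace_mul_cycle, Unitary.coe_star_mul_self,
    one_mul, trace_diagonal, Complex.re_sum]
  simp only [Complex.ofReal_re]

lemma Matrix.IsHermitian.re_det_eq_prod_eigenvalues {k : ℕ} {P : Matrix (Fin k) (Fin k) ℂ}
    (hP : P.IsHermitian) :
    P.det.re = ∏ i, hP.eigenvalues i := by
  rw [hP.det_eq_prod_eigenvalues]
  exact_mod_cast Complex.ofReal_re _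

lemma Matrix.IsHermitian.normSq_det_inv {k : ℕ} {S : Matrix (Fin k) (Fin k) ℂ}
    (hS : S.IsHermitian) : Complex.normSq S⁻¹.det = (S * S).det.re⁻¹ := by
  have hSS : S * S = Sᴴ * S := by rw [hS.eq]
  rw [det_nonsing_inv, Ring.inverse_eq_inv', map_inv₀, hSS, det_mul, det_conjTranspose,
    Complex.star_def, ← Complex.normSq_eq_conj_mul_self, Complex.ofReal_re]

lemma Matrix.PosDef.re_det_mul_self_pos {k : ℕ} {S : Matrix (Fin k) (Fin k) ℂ} (hS : S.PosDef) :
    0 < (S * S).det.re :=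
  (Complex.lt_def.mp (det_mul S S ▸ mul_pos hS.det_pos hS.det_pos)).1

lemma prod_re_det_le_exp_neg_min_one_sum_sqNorm {ι : Type*} [Fintype ι] {k : ℕ}
    {P : ι → Matrix (Fin k) (Fin k) ℂ} (hP : ∀ j, (P j).PosSemidef)
    (htr : ∑ j, (P j).trace = Fintype.card ι * k) :
    ∏ j, (P j).det.re ≤ Real.exp (-(min 1 (∑ j, sqNorm (P j - 1)) / 6)) := by
  set g : ι × Fin k → ℝ := fun p => (hP p.1).1.eigenvalues p.2
  have hsum : ∑ p, g p = Fintype.card (ι × Fin k) := by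
    have : ((∑ p, g p : ℝ) : ℂ) = Fintype.card ι * k := by
      simp_rw [← htr, (hP _).1.trace_eq_sum_eigenvalues, Fintype.sum_prod_type, g]
      push_cast; rfl
    simp only [Fintype.card_prod, Fintype.card_fin, Nat.cast_mul]
    exact_mod_cast this
  have hprod : ∏ j, (P j).det.re = ∏ p, g p := by
    simp_rw [Fintype.prod_prod_type, (hP _).1.re_det_eq_prod_eigenvalues, g]
  have hsq : ∑ j, sqNorm (P j - 1) = ∑ p, (g p - 1) ^ 2 := by
    simp_rw [Fintype.sum_prod_type, (hP _).1.sqNorm_sub_one_eq_sum_eigenvalues, g]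
  rw [hprod, hsq]
  exact prod_le_exp_neg_min_one_sum_sq (fun p => (hP p.1).eigenvalues_nonneg p.2) hsum

section Capacity

variable {m n r c : ℕ}

def capMatrix (A : Fin m → Fin n → Matrix (Fin r) (Fin c) ℂ)
    (X : Fin m → Matrix (Fin r) (Fin r) ℂ) (j : Fin n) : Matrix (Fin c) (Fin c) ℂ :=
  ((n : ℂ) * c / ((m : ℂ) * r)) • ∑ i, (A i j)ᴴ * X i * A i j

def capObjective (A : Fin m → Fin n → Matrix (Fin r) (Fin c) ℂ)
    (X : Fin m → Matrix (Fin r) (Fin r) ℂ) : ℝ :=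
  ∏ j, (capMatrix A X j).det.re

lemma capMatrix_posSemidef (A : Fin m → Fin n → Matrix (Fin r) (Fin c) ℂ)
    {X : Fin m → Matrix (Fin r) (Fin r) ℂ} (hX : ∀ i, (X i).PosSemidef) (j : Fin n) :
    (capMatrix A X j).PosSemidef :=
  (posSemidef_sum _ fun i _ => (hX i).conjTranspose_mul_mul_same (A i j)).smul (by positivity)

lemma capObjective_nonneg (A : Fin m → Fin n → Matrix (Fin r) (Fin c) ℂ)
    {X : Fin m → Matrix (Fin r) (Fin r) ℂ} (hX : ∀ i, (X i).PosSemidef) :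
    0 ≤ capObjective A X :=
  Finset.prod_nonneg fun j _ =>
    (Complex.nonneg_iff.mp (capMatrix_posSemidef A hX j).det_nonneg).1

lemma cap_nonneg (A : Fin m → Fin n → Matrix (Fin r) (Fin c) ℂ) : 0 ≤ cap A := by
  refine Real.sInf_nonneg ?_
  rintro _ ⟨X, hX, -, rfl⟩
  exact capObjective_nonneg A fun i => (hX i).posSemidef

lemma cap_le_capObjective (A : Fin m → Fin n → Matrix (Fin r) (Fin c) ℂ)
    {X : Fin m → Matrix (Fin r) (Fin r) ℂ} (hX : ∀ i, (X i).PosDef) (hdet : ∏ i, (X i).det = 1) :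
    cap A ≤ capObjective A X := by
  refine csInf_le ⟨0, ?_⟩ ⟨X, hX, hdet, rfl⟩
  rintro _ ⟨Y, hY, -, rfl⟩
  exact capObjective_nonneg A fun i => (hY i).posSemidef

lemma le_cap_of_forall_le (A : Fin m → Fin n → Matrix (Fin r) (Fin c) ℂ) {b : ℝ}
    (h : ∀ X : Fin m → Matrix (Fin r) (Fin r) ℂ,
      (∀ i, (X i).PosDef) → ∏ i, (X i).det = 1 → b ≤ capObjective A X) :
    b ≤ cap A := by
  refine le_csInf ⟨_, 1, fun _ => PosDef.one, by simp, rfl⟩ ?_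
  rintro _ ⟨X, hX, hdet, rfl⟩
  exact h X hX hdet

lemma capObjective_mul_left (A : Fin m → Fin n → Matrix (Fin r) (Fin c) ℂ)
    (T X : Fin m → Matrix (Fin r) (Fin r) ℂ) :
    capObjective (fun i j => T i * A i j) X = capObjective A fun i => (T i)ᴴ * X i * T i := by
  simp only [capObjective, capMatrix, conjTranspose_mul, Matrix.mul_assoc]

lemma capObjective_smul (A : Fin m → Fin n → Matrix (Fin r) (Fin c) ℂ)
    (X : Fin m → Matrix (Fin r) (Fin r) ℂ) (a : ℝ) :
    capObjective A (fun i => (a : ℂ) • X i) = a ^ (c * n) * capObjective A X := by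
  have hmatrix : ∀ j, capMatrix A (fun i => (a : ℂ) • X i) j = (a : ℂ) • capMatrix A X j := by
    intro j
    simp only [capMatrix, Matrix.mul_smul, Matrix.smul_mul, Finset.smul_sum, smul_comm (a : ℂ)]
  simp only [capObjective, hmatrix, det_smul, Fintype.card_fin, ← Complex.ofReal_pow,
    Complex.re_ofReal_mul, Finset.prod_mul_distrib, Finset.prod_const, Finset.card_univ, pow_mul]

lemma capObjective_mul_right (A : Fin m → Fin n → Matrix (Fin r) (Fin c) ℂ)
    (U : Fin n → Matrix (Fin c) (Fin c) ℂ) (X : Fin m → Matrix (Fin r) (Fin r) ℂ) :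
    capObjective (fun i j => A i j * U j) X
      = (∏ j, Complex.normSq (U j).det) * capObjective A X := by
  have hmatrix : ∀ j, capMatrix (fun i j => A i j * U j) X j = (U j)ᴴ * capMatrix A X j * U j := by
    intro j
    simp only [capMatrix, Matrix.mul_smul, Matrix.smul_mul, Matrix.mul_sum, Matrix.sum_mul,
      conjTranspose_mul, Matrix.mul_assoc]
  have hdet : ∀ j, (capMatrix (fun i j => A i j * U j) X j).det.re
      = Complex.normSq (U j).det * (capMatrix A X j).det.re := by
    intro j
    rw [hmatrix, det_mul, det_mul, det_conjTranspose, mul_comm, ← mul_assoc, Complex.star_def,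
      Complex.mul_conj, Complex.re_ofReal_mul]
  simp only [capObjective, hdet, Finset.prod_mul_distrib]

lemma mul_cap_le_cap_mul_right (A : Fin m → Fin n → Matrix (Fin r) (Fin c) ℂ)
    (U : Fin n → Matrix (Fin c) (Fin c) ℂ) :
    (∏ j, Complex.normSq (U j).det) * cap A ≤ cap fun i j => A i j * U j := by
  refine le_cap_of_forall_le _ fun X hX hdet => ?_
  rw [capObjective_mul_right]
  gcongr
  · exact Finset.prod_nonneg fun j _ => Complex.normSq_nonneg _
  · exact cap_le_capObjective A hX hdet

lemma rpow_mul_cap_le_cap_mul_left (hm : 0 < m) (hr : 0 < r)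
    (A : Fin m → Fin n → Matrix (Fin r) (Fin c) ℂ) {T : Fin m → Matrix (Fin r) (Fin r) ℂ}
    (hT : ∀ i, IsUnit (T i)) :
    (∏ i, Complex.normSq (T i).det) ^ ((n * c : ℝ) / (m * r)) * cap A
      ≤ cap fun i j => T i * A i j := by
  set d := ∏ i, Complex.normSq (T i).det
  have hd : 0 < d := Finset.prod_pos fun i _ =>
    Complex.normSq_pos.mpr ((T i).isUnit_iff_isUnit_det.mp (hT i)).ne_zero
  have hmr : (m * r : ℝ) ≠ 0 := by positivity
  set a := d ^ (-(m * r : ℝ)⁻¹)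
  have ha : 0 < a := Real.rpow_pos_of_pos hd _
  have ha_det : a ^ (r * m) * d = 1 := by
    rw [← Real.rpow_natCast, ← Real.rpow_mul hd.le, ← Real.rpow_add_one hd.ne']
    conv_rhs => rw [← Real.rpow_zero d]
    congr 1
    push_cast
    field_simp
    ring
  have ha_obj : d ^ ((n * c : ℝ) / (m * r)) * a ^ (c * n) = 1 := by
    rw [← Real.rpow_natCast, ← Real.rpow_mul hd.le, ← Real.rpow_add hd]
    conv_rhs => rw [← Real.rpow_zero d]
    congr 1
    push_cast
    field_simp
    ring
  refine le_cap_of_forall_le _ fun X hX hdet => ?_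
  set Y := fun i => (a : ℂ) • ((T i)ᴴ * X i * T i)
  have hY : ∀ i, (Y i).PosDef := fun i =>
    ((hX i).conjTranspose_mul_mul_same (mulVec_injective_of_isUnit (hT i))).smul
      (by exact_mod_cast ha)
  have hY_det : ∏ i, (Y i).det = 1 := by
    have h : ∀ i, (Y i).det = ((a ^ r * Complex.normSq (T i).det : ℝ) : ℂ) * (X i).det := by
      intro i
      simp only [Y, det_smul, det_mul, det_conjTranspose, Fintype.card_fin, Complex.star_def]
      push_cast
      rw [Complex.normSq_eq_conj_mul_self]
      ring
    simp only [h, Finset.prod_mul_distrib, hdet, mul_one, ← Complex.ofReal_prod, Finset.prod_const,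
      Finset.card_univ, Fintype.card_fin, ← pow_mul]
    exact_mod_cast ha_det
  calc d ^ ((n * c : ℝ) / (m * r)) * cap A
      ≤ d ^ ((n * c : ℝ) / (m * r)) * capObjective A Y := by
        gcongr
        exact cap_le_capObjective A hY hY_det
    _ = capObjective (fun i j => T i * A i j) X := by
        rw [capObjective_smul, capObjective_mul_left, ← mul_assoc, ha_obj, one_mul]

end Capacity

section Normalization

variable {m n r c : ℕ}

lemma posSemidef_rowSum (A : Fin m → Fin n → Matrix (Fin r) (Fin c) ℂ) (i : Fin m) :
    (RowSum A i).PosSemidef :=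
  posSemidef_sum _ fun j _ => posSemidef_self_mul_conjTranspose (A i j)

lemma posSemidef_colSum (A : Fin m → Fin n → Matrix (Fin r) (Fin c) ℂ) (j : Fin n) :
    (ColSum A j).PosSemidef :=
  (posSemidef_sum _ fun i _ => posSemidef_conjTranspose_mul_self (A i j)).smul (by positivity)

lemma sum_trace_colSum (A : Fin m → Fin n → Matrix (Fin r) (Fin c) ℂ) :
    ∑ j, (ColSum A j).trace = (n : ℂ) * c / ((m : ℂ) * r) * ∑ i, (RowSum A i).trace := by
  simp only [ColSum, RowSum, trace_smul, trace_sum, smul_eq_mul, ← Finset.mul_sum]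
  rw [Finset.sum_comm]
  simp only [trace_mul_comm (A _ _)ᴴ]

theorem cap_le_cap_of_colSum_eq_one (hm : 0 < m) (hn : 0 < n) (hr : 0 < r) (hc : 0 < c)
    (A : Fin m → Fin n → Matrix (Fin r) (Fin c) ℂ) (hcol : ∀ j, ColSum A j = 1)
    {S : Fin m → Matrix (Fin r) (Fin r) ℂ} (hS : ∀ i, (S i).PosDef ∧ S i * S i = RowSum A i) :
    cap A ≤ cap fun i j => (S i)⁻¹ * A i j := by
  set t := ∏ i, (RowSum A i).det.re
  have htr : ∑ i, (RowSum A i).trace = Fintype.card (Fin m) * r := by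
    have h := sum_trace_colSum A
    simp only [hcol, trace_one, Fintype.card_fin, Finset.sum_const, Finset.card_univ,
      nsmul_eq_mul] at h
    rw [Fintype.card_fin]
    field_simp at h
    exact h.symm
  have hmin : 0 ≤ min 1 (∑ i, sqNorm (RowSum A i - 1)) :=
    le_min zero_le_one (Finset.sum_nonneg fun i _ => sqNorm_nonneg _)
  have ht_le : t ≤ 1 :=
    (prod_re_det_le_exp_neg_min_one_sum_sqNorm (posSemidef_rowSum A) htr).trans
      (Real.exp_le_one_iff.mpr (by linarith))
  have ht_pos : 0 < t := Finset.prod_pos fun i _ => (hS i).2 ▸ (hS i).1.re_det_mul_self_pos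
  have hd : ∏ i, Complex.normSq (S i)⁻¹.det = t⁻¹ := by
    simp only [t, ← Finset.prod_inv_distrib, ← (hS _).2, (hS _).1.1.normSq_det_inv]
  calc cap A ≤ t⁻¹ ^ ((n * c : ℝ) / (m * r)) * cap A :=
        le_mul_of_one_le_left (cap_nonneg A)
          (Real.one_le_rpow ((one_le_inv₀ ht_pos).mpr ht_le) (by positivity))
    _ ≤ cap fun i j => (S i)⁻¹ * A i j :=
        hd ▸ rpow_mul_cap_le_cap_mul_left hm hr A fun i =>
          isUnit_nonsing_inv_iff.mpr (hS i).1.isUnit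

theorem exp_min_mul_cap_le_cap_of_rowSum_eq_one (hm : 0 < m) (hr : 0 < r)
    (A : Fin m → Fin n → Matrix (Fin r) (Fin c) ℂ) (hrow : ∀ i, RowSum A i = 1)
    {S : Fin n → Matrix (Fin c) (Fin c) ℂ} (hS : ∀ j, (S j).PosDef ∧ S j * S j = ColSum A j) :
    min (Real.exp (1 / 6)) (Real.exp (dsDist A / 6)) * cap A
      ≤ cap fun i j => A i j * (S j)⁻¹ := by
  set t := ∏ j, (ColSum A j).det.re
  have htr : ∑ j, (ColSum A j).trace = Fintype.card (Fin n) * c := by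
    simp only [sum_trace_colSum, hrow, trace_one, Fintype.card_fin, Finset.sum_const,
      Finset.card_univ, nsmul_eq_mul]
    field_simp
  have hds : ∑ j, sqNorm (ColSum A j - 1) = dsDist A := by
    simp [dsDist, hrow, sqNorm]
  have ht_le : t ≤ Real.exp (-(min 1 (dsDist A) / 6)) :=
    hds ▸ prod_re_det_le_exp_neg_min_one_sum_sqNorm (posSemidef_colSum A) htr
  have ht_pos : 0 < t := Finset.prod_pos fun j _ => (hS j).2 ▸ (hS j).1.re_det_mul_self_pos
  have hd : ∏ j, Complex.normSq (S j)⁻¹.det = t⁻¹ := by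
    simp only [t, ← Finset.prod_inv_distrib, ← (hS _).2, (hS _).1.1.normSq_det_inv]
  calc min (Real.exp (1 / 6)) (Real.exp (dsDist A / 6)) * cap A
      = Real.exp (min 1 (dsDist A) / 6) * cap A := by
        rw [← min_div_div_right (by norm_num), Real.exp_monotone.map_min]
    _ ≤ t⁻¹ * cap A := by
        gcongr
        · exact cap_nonneg A
        · rwa [le_inv_comm₀ (Real.exp_pos _) ht_pos, ← Real.exp_neg]
    _ ≤ cap fun i j => A i j * (S j)⁻¹ := hd ▸ mul_cap_le_cap_mul_right A _

end Normalization

/-- Claim 2.12: capacity does not decrease under row normalization (for a column normalized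
matrix), and grows by a quantitative factor under column normalization (for a row normalized
matrix). The inverse square roots `R_i(A)^{-1/2}` and `C_j(A)^{-1/2}` are expressed through
arbitrary positive definite square roots `S i` (such a square root exists and is unique). -/
theorem cap_row_col_normalization {m n r c : ℕ}
    (hm : 0 < m) (hn : 0 < n) (hr : 0 < r) (hc : 0 < c)
    (A : Fin m → Fin n → Matrix (Fin r) (Fin c) ℂ) (ε : ℝ)
    (hds : dsDist A = ε) :
    ((∀ j, ColSum A j = 1) →
      ∀ S : Fin m → Matrix (Fin r) (Fin r) ℂ,
        (∀ i, (S i).PosDef ∧ S i * S i = RowSum A i) →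
        cap A ≤ cap (fun i j => (S i)⁻¹ * A i j)) ∧
    ((∀ i, RowSum A i = 1) →
      ∀ S : Fin n → Matrix (Fin c) (Fin c) ℂ,
        (∀ j, (S j).PosDef ∧ S j * S j = ColSum A j) →
        min (Real.exp (1 / 6)) (Real.exp (ε / 6)) * cap A ≤
          cap (fun i j => A i j * (S j)⁻¹)) :=
  ⟨fun hcol _ hS => cap_le_cap_of_colSum_eq_one hm hn hr hc A hcol hS,
    fun hrow _ hS => hds ▸ exp_min_mul_cap_le_cap_of_rowSum_eq_one hm hr A hrow hS⟩
end
end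

section
/- Let M ∈ M_{m,n}(r,c) be a (q,k,t)-design matrix with q ≥ 2 and t ≥ 1 that is scalable. Then rank(M) ≥ nc − nc/(1+X), where X = mrq/(cnt(q−1)). -/
open Matrix BigOperators
open scoped ComplexOrder

noncomputable section

/-- The underlying `(r*m) x (c*n)` scalar matrix of a block matrix. -/
def flattenBlocks {m n r c : ℕ} (A : Fin m → Fin n → Matrix (Fin r) (Fin c) ℂ) :
    Matrix (Fin m × Fin r) (Fin n × Fin c) ℂ :=
  fun p q => A p.1 q.1 p.2 q.2

/-- The rank of a block matrix: the rank of the underlying scalar matrix. -/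
def blockRank {m n r c : ℕ} (A : Fin m → Fin n → Matrix (Fin r) (Fin c) ℂ) : ℕ :=
  (flattenBlocks A).rank

/-- A (multi)set of `s` complex `r x c` matrices, given as an indexed family, is well-spread
if for every subspace `V` of `ℂ^c` the sum of the dimensions of the images `A_i(V)` is at
least `(r*s/c) * dim V`. -/
def WellSpread {r c s : ℕ} (B : Fin s → Matrix (Fin r) (Fin c) ℂ) : Prop :=
  ∀ V : Submodule ℂ (Fin c → ℂ),
    ((r : ℝ) * s / c) * (Module.finrank ℂ V) ≤
      ∑ i, ((Module.finrank ℂ (V.map (B i).mulVecLin) : ℝ))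

/-- `A` is a `(q,k,t)`-design matrix: each row has at most `q` nonzero blocks, each column
contains `k` blocks (in distinct rows) forming a well-spread set, and the supports of any two
distinct columns intersect in at most `t` rows. -/
def IsDesign {m n r c : ℕ} (q k t : ℕ)
    (A : Fin m → Fin n → Matrix (Fin r) (Fin c) ℂ) : Prop :=
  (∀ i : Fin m, ({j : Fin n | A i j ≠ 0}).ncard ≤ q) ∧
  (∀ j : Fin n, ∃ f : Fin k → Fin m, Function.Injective f ∧
      WellSpread (fun l => A (f l) j)) ∧
  (∀ j j' : Fin n, j ≠ j' → ({i : Fin m | A i j ≠ 0 ∧ A i j' ≠ 0}).ncard ≤ t)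

/-!
Take a scaling `B` of `M` that is nearly doubly stochastic, let `F` be its underlying scalar
matrix and `N = F* F`, whose `(j, j')` block is `G j j' = ∑ i, (B i j)* B i j'`. Scaling does not
increase the rank, and Cauchy–Schwarz on the eigenvalues of `N` gives
`(tr N)² ≤ rank N · ‖N‖²`. Now `tr N = ∑ i, tr R_i ≈ mr`, and `‖N‖² = ∑ ‖G j j'‖²`. The diagonal
blocks are `(mr/nc) C_j ≈ (mr/nc) I`. Two columns share at most `t` rows, so Cauchy–Schwarz bounds
the off-diagonal part by `t ∑ i, (‖R_i‖² - ∑ j, ‖B i j (B i j)*‖²)`, and a row has at most `q`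
nonzero blocks, so `∑ j, ‖B i j (B i j)*‖² ≥ (tr R_i)² / (qr)`. In the limit of exact double
stochasticity this reads `(mr)² ≤ rank M · ((mr)²/(nc) + tm(r - r/q))`, which rearranges to the
claimed bound.
-/

attribute [local instance] Matrix.frobeniusSeminormedAddCommGroup Matrix.frobeniusNormedSpace

open Filter Topology

lemma sq_sum_le_mul_sum_sq_of_support {ι : Type*} [Fintype ι] {x : ι → ℝ} {s : Set ι} {q : ℕ}
    (hs : s.ncard ≤ q) (hx : ∀ i ∉ s, x i = 0) :
    (∑ i, x i) ^ 2 ≤ q * ∑ i, x i ^ 2 := by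
  classical
  have hsum : ∑ i, x i = ∑ i ∈ s.toFinset, x i :=
    (Finset.sum_subset (Finset.subset_univ _) fun i _ hi => hx i (by simpa using hi)).symm
  rw [hsum]
  calc (∑ i ∈ s.toFinset, x i) ^ 2 ≤ s.toFinset.card * ∑ i ∈ s.toFinset, x i ^ 2 :=
        sq_sum_le_card_mul_sum_sq
    _ ≤ q * ∑ i, x i ^ 2 := by
        gcongr
        · exact_mod_cast (Set.ncard_eq_toFinset_card' s).symm.trans_le hs
        · exact Finset.subset_univ _

lemma norm_sum_sq_le_mul_sum_norm_sq_of_support {ι E : Type*} [Fintype ι]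
    [SeminormedAddCommGroup E] {v : ι → E} {s : Set ι} {q : ℕ}
    (hs : s.ncard ≤ q) (hv : ∀ i ∉ s, v i = 0) :
    ‖∑ i, v i‖ ^ 2 ≤ q * ∑ i, ‖v i‖ ^ 2 :=
  calc ‖∑ i, v i‖ ^ 2 ≤ (∑ i, ‖v i‖) ^ 2 := by gcongr; exact norm_sum_le _ _
    _ ≤ q * ∑ i, ‖v i‖ ^ 2 :=
        sq_sum_le_mul_sum_sq_of_support hs fun i hi => by simp [hv i hi]

lemma sub_div_one_add_div_le_of_sq_le {a b s K : ℝ} (ha : 0 < a) (hb : 0 < b) (hs : 0 < s)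
    (h : a ^ 2 ≤ K * (a ^ 2 / b + a * s)) : b - b / (1 + a / (b * s)) ≤ K := by
  have hK : a * b ≤ K * (a + b * s) := by
    rw [← mul_le_mul_iff_right₀ (show 0 < a / b by positivity)]
    calc a / b * (a * b) = a ^ 2 := by field_simp
      _ ≤ K * (a ^ 2 / b + a * s) := h
      _ = a / b * (K * (a + b * s)) := by field_simp
  calc b - b / (1 + a / (b * s)) = a * b / (a + b * s) := by field_simp; ring
    _ ≤ K := (div_le_iff₀ (by positivity)).2 hK

lemma tendsto_of_norm_sub_sq_le {E : Type*} [SeminormedAddCommGroup E] {f : ℕ → E} {a : E}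
    (h : ∀ k, ‖f k - a‖ ^ 2 ≤ (1 / ((k : ℝ) + 1)) ^ 2) : Tendsto f atTop (𝓝 a) :=
  tendsto_iff_norm_sub_tendsto_zero.2 <|
    squeeze_zero (fun _ => norm_nonneg _)
      (fun k => (pow_le_pow_iff_left₀ (norm_nonneg _) (by positivity) two_ne_zero).1 (h k))
      tendsto_one_div_add_atTop_nhds_zero_nat

namespace Matrix

variable {ι κ 𝕜 : Type*} [Fintype ι] [Fintype κ]

lemma frobenius_norm_sq_eq_sum (A : Matrix ι κ ℂ) : ‖A‖ ^ 2 = ∑ i, ∑ j, ‖A i j‖ ^ 2 := by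
  rw [frobenius_norm_def, ← Real.rpow_natCast, ← Real.rpow_mul (by positivity)]
  norm_num

lemma re_trace_mul_conjTranspose_self (A : Matrix ι κ ℂ) : (A * Aᴴ).trace.re = ‖A‖ ^ 2 := by
  simp only [frobenius_norm_sq_eq_sum, trace, diag_apply, mul_apply, conjTranspose_apply,
    Complex.re_sum, Complex.star_def, Complex.mul_conj, Complex.normSq_eq_norm_sq]
  norm_cast

lemma IsHermitian.re_trace_mul_self {A : Matrix ι ι ℂ} (hA : A.IsHermitian) :
    (A * A).trace.re = ‖A‖ ^ 2 := by
  nth_rw 2 [← hA.eq]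
  exact re_trace_mul_conjTranspose_self A

lemma frobenius_norm_one_sq [DecidableEq ι] : ‖(1 : Matrix ι ι ℂ)‖ ^ 2 = Fintype.card ι := by
  rw [← re_trace_mul_conjTranspose_self]
  simp

lemma frobenius_norm_conjTranspose_mul_sq (X Y : Matrix κ ι ℂ) :
    ‖Xᴴ * Y‖ ^ 2 = (X * Xᴴ * (Y * Yᴴ)).trace.re := by
  rw [← re_trace_mul_conjTranspose_self, conjTranspose_mul, conjTranspose_conjTranspose,
    ← Matrix.mul_assoc, trace_mul_cycle]
  simp only [Matrix.mul_assoc]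

lemma sq_re_trace_le (A : Matrix ι ι ℂ) : A.trace.re ^ 2 ≤ Fintype.card ι * ‖A‖ ^ 2 := by
  rw [trace, Complex.re_sum, frobenius_norm_sq_eq_sum]
  calc (∑ i, (A i i).re) ^ 2 ≤ Fintype.card ι * ∑ i, (A i i).re ^ 2 := by
        simpa using sq_sum_le_card_mul_sum_sq (s := Finset.univ) (f := fun i => (A i i).re)
    _ ≤ Fintype.card ι * ∑ i, ∑ j, ‖A i j‖ ^ 2 := by
        gcongr with i
        calc (A i i).re ^ 2 ≤ ‖A i i‖ ^ 2 := by
              rw [← sq_abs]; gcongr; exact Complex.abs_re_le_norm _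
          _ ≤ ∑ j, ‖A i j‖ ^ 2 :=
              Finset.single_le_sum (f := fun j => ‖A i j‖ ^ 2) (fun _ _ => by positivity)
                (Finset.mem_univ i)

lemma trace_conjStarAlgAut [RCLike 𝕜] [DecidableEq ι] (U : unitary (Matrix ι ι 𝕜))
    (X : Matrix ι ι 𝕜) :
    (Unitary.conjStarAlgAut 𝕜 _ U X).trace = X.trace := by
  rw [Unitary.conjStarAlgAut_apply, trace_mul_cycle, Unitary.coe_star_mul_self, Matrix.one_mul]

lemma IsHermitian.trace_mul_self_eq_sum_eigenvalues_sq [RCLike 𝕜] [DecidableEq ι]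
    {A : Matrix ι ι 𝕜} (hA : A.IsHermitian) :
    (A * A).trace = ∑ i, (hA.eigenvalues i : 𝕜) ^ 2 := by
  conv_lhs => rw [hA.spectral_theorem]
  rw [← map_mul, trace_conjStarAlgAut, diagonal_mul_diagonal, trace_diagonal]
  simp [sq]

lemma IsHermitian.sq_re_trace_le_rank_mul {A : Matrix ι ι ℂ} (hA : A.IsHermitian) :
    A.trace.re ^ 2 ≤ A.rank * (A * A).trace.re := by
  classical
  rw [hA.trace_eq_sum_eigenvalues, hA.trace_mul_self_eq_sum_eigenvalues_sq,
    hA.rank_eq_card_non_zero_eigs, Fintype.card_eq_nat_card]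
  simp only [← RCLike.ofReal_pow, ← RCLike.re_to_complex, map_sum, RCLike.ofReal_re]
  exact sq_sum_le_mul_sum_sq_of_support (s := {i | hA.eigenvalues i ≠ 0})
    (Nat.card_coe_set_eq _).ge fun i hi => by simpa using hi

lemma sum_sum_erase_re_trace_mul_le [DecidableEq κ] {P : κ → Matrix ι ι ℂ}
    (hP : ∀ j, (P j).IsHermitian) {s : Set κ} {q : ℕ} (hs : s.ncard ≤ q) (hP0 : ∀ j ∉ s, P j = 0) :
    ∑ j, ∑ j' ∈ Finset.univ.erase j, (P j * P j').trace.re ≤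
      ‖∑ j, P j‖ ^ 2 - (∑ j, P j).trace.re ^ 2 / (q * Fintype.card ι) := by
  have hS : (∑ j, P j).IsHermitian := by
    simp only [IsHermitian, conjTranspose_sum, (hP _).eq]
  have hfull : ∑ j, ∑ j', (P j * P j').trace.re = ‖∑ j, P j‖ ^ 2 := by
    simp only [← hS.re_trace_mul_self, Finset.sum_mul_sum, trace_sum, Complex.re_sum]
  have hdiag : (∑ j, P j).trace.re ^ 2 / (q * Fintype.card ι) ≤ ∑ j, (P j * P j).trace.re := by
    simp only [fun j => (hP j).re_trace_mul_self]
    apply div_le_of_le_mul₀ (by positivity) (Finset.sum_nonneg fun j _ => by positivity)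
    calc (∑ j, P j).trace.re ^ 2 = (∑ j, (P j).trace.re) ^ 2 := by
          rw [trace_sum, Complex.re_sum]
      _ ≤ q * ∑ j, (P j).trace.re ^ 2 :=
          sq_sum_le_mul_sum_sq_of_support hs fun j hj => by simp [hP0 j hj]
      _ ≤ q * ∑ j, Fintype.card ι * ‖P j‖ ^ 2 := by
          gcongr with j; exact sq_re_trace_le _
      _ = (∑ j, ‖P j‖ ^ 2) * (q * Fintype.card ι) := by
          rw [← Finset.mul_sum]; ring
  simp only [Finset.sum_erase_eq_sub (Finset.mem_univ _), Finset.sum_sub_distrib]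
  rw [hfull]
  exact sub_le_sub_left hdiag _

lemma comp_diagonal_apply {ι κ α : Type*} [DecidableEq ι] [Zero α] (D : ι → Matrix κ κ α)
    (i i' : ι) (a a' : κ) :
    comp _ _ _ _ _ (diagonal D) (i, a) (i', a') = if i = i' then D i a a' else 0 := by
  rw [comp_apply, diagonal_apply]; split_ifs <;> rfl

end Matrix

section BlockMatrix

variable {m n r c : ℕ}

def gramBlock (B : Fin m → Fin n → Matrix (Fin r) (Fin c) ℂ) (j j' : Fin n) :
    Matrix (Fin c) (Fin c) ℂ :=
  ∑ i, (B i j)ᴴ * B i j'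

lemma conjTranspose_flattenBlocks_mul_self (B : Fin m → Fin n → Matrix (Fin r) (Fin c) ℂ) :
    (flattenBlocks B)ᴴ * flattenBlocks B = flattenBlocks (gramBlock B) := by
  ext ⟨j, b⟩ ⟨j', b'⟩
  simp [flattenBlocks, gramBlock, mul_apply, Fintype.sum_prod_type, Matrix.sum_apply]

lemma frobenius_norm_flattenBlocks_sq (B : Fin m → Fin n → Matrix (Fin r) (Fin c) ℂ) :
    ‖flattenBlocks B‖ ^ 2 = ∑ i, ∑ j, ‖B i j‖ ^ 2 := by
  simp only [frobenius_norm_sq_eq_sum, Fintype.sum_prod_type, flattenBlocks]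
  refine Finset.sum_congr rfl fun i _ => ?_
  rw [Finset.sum_comm]

lemma re_trace_rowSum (B : Fin m → Fin n → Matrix (Fin r) (Fin c) ℂ) (i : Fin m) :
    (RowSum B i).trace.re = ∑ j, ‖B i j‖ ^ 2 := by
  simp only [RowSum, trace_sum, Complex.re_sum, re_trace_mul_conjTranspose_self]

lemma sq_sum_re_trace_rowSum_le_blockRank_mul (B : Fin m → Fin n → Matrix (Fin r) (Fin c) ℂ) :
    (∑ i, (RowSum B i).trace.re) ^ 2 ≤ blockRank B * ∑ j, ∑ j', ‖gramBlock B j j'‖ ^ 2 := by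
  set F := flattenBlocks B
  have hN : (Fᴴ * F).IsHermitian := isHermitian_conjTranspose_mul_self F
  calc (∑ i, (RowSum B i).trace.re) ^ 2 = (Fᴴ * F).trace.re ^ 2 := by
        rw [trace_mul_comm, re_trace_mul_conjTranspose_self, frobenius_norm_flattenBlocks_sq]
        simp only [re_trace_rowSum]
    _ ≤ (Fᴴ * F).rank * ((Fᴴ * F) * (Fᴴ * F)).trace.re := hN.sq_re_trace_le_rank_mul
    _ = blockRank B * ∑ j, ∑ j', ‖gramBlock B j j'‖ ^ 2 := by
        rw [blockRank, rank_conjTranspose_mul_self, hN.re_trace_mul_self,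
          conjTranspose_flattenBlocks_mul_self, frobenius_norm_flattenBlocks_sq]

lemma flattenBlocks_eq_comp_diagonal_mul {A B : Fin m → Fin n → Matrix (Fin r) (Fin c) ℂ}
    (R : Fin m → Matrix (Fin r) (Fin r) ℂ) (C : Fin n → Matrix (Fin c) (Fin c) ℂ)
    (hB : ∀ i j, B i j = R i * A i j * C j) :
    flattenBlocks B =
      comp _ _ _ _ _ (diagonal R) * flattenBlocks A * comp _ _ _ _ _ (diagonal C) := by
  ext ⟨i, a⟩ ⟨j, b⟩
  simp only [flattenBlocks, hB, mul_apply, Fintype.sum_prod_type, comp_diagonal_apply]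
  simp [Finset.sum_mul]

lemma IsScaling.blockRank_le {A B : Fin m → Fin n → Matrix (Fin r) (Fin c) ℂ}
    (h : IsScaling A B) : blockRank B ≤ blockRank A := by
  obtain ⟨R, C, -, -, hB⟩ := h
  rw [blockRank, blockRank, flattenBlocks_eq_comp_diagonal_mul R C hB]
  exact (rank_mul_le_left _ _).trans (rank_mul_le_right _ _)

lemma IsScaling.eq_zero {A B : Fin m → Fin n → Matrix (Fin r) (Fin c) ℂ}
    (h : IsScaling A B) {i : Fin m} {j : Fin n} (hA : A i j = 0) : B i j = 0 := by
  obtain ⟨R, C, -, -, hB⟩ := h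
  rw [hB, hA, Matrix.mul_zero, Matrix.zero_mul]

lemma norm_gramBlock_sq_le {t : ℕ} (B : Fin m → Fin n → Matrix (Fin r) (Fin c) ℂ) {j j' : Fin n}
    (hcol : {i | B i j ≠ 0 ∧ B i j' ≠ 0}.ncard ≤ t) :
    ‖gramBlock B j j'‖ ^ 2 ≤ t * ∑ i, (B i j * (B i j)ᴴ * (B i j' * (B i j')ᴴ)).trace.re := by
  calc ‖gramBlock B j j'‖ ^ 2 ≤ t * ∑ i, ‖(B i j)ᴴ * B i j'‖ ^ 2 := by
        refine norm_sum_sq_le_mul_sum_norm_sq_of_support hcol fun i hi => ?_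
        rcases not_and_or.mp hi with h | h <;> simp [not_not.mp h]
    _ = _ := by simp only [frobenius_norm_conjTranspose_mul_sq]

lemma sum_sum_norm_gramBlock_sq_le {q t : ℕ} (B : Fin m → Fin n → Matrix (Fin r) (Fin c) ℂ)
    (hrow : ∀ i, {j | B i j ≠ 0}.ncard ≤ q)
    (hcol : ∀ j j', j ≠ j' → {i | B i j ≠ 0 ∧ B i j' ≠ 0}.ncard ≤ t) :
    ∑ j, ∑ j', ‖gramBlock B j j'‖ ^ 2 ≤ ∑ j, ‖gramBlock B j j‖ ^ 2 +
      t * ∑ i, (‖RowSum B i‖ ^ 2 - (RowSum B i).trace.re ^ 2 / (q * r)) := by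
  have hrow' : ∀ i, ∑ j, ∑ j' ∈ Finset.univ.erase j,
      (B i j * (B i j)ᴴ * (B i j' * (B i j')ᴴ)).trace.re ≤
        ‖RowSum B i‖ ^ 2 - (RowSum B i).trace.re ^ 2 / (q * r) := fun i => by
    simpa only [RowSum, Fintype.card_fin] using
      sum_sum_erase_re_trace_mul_le (fun j => isHermitian_mul_conjTranspose_self (B i j))
        (hrow i) fun j hj => by simp [not_not.mp hj]
  calc ∑ j, ∑ j', ‖gramBlock B j j'‖ ^ 2
      = ∑ j, ‖gramBlock B j j‖ ^ 2 + ∑ j, ∑ j' ∈ Finset.univ.erase j, ‖gramBlock B j j'‖ ^ 2 := by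
        rw [← Finset.sum_add_distrib]
        exact Finset.sum_congr rfl fun j _ => (Finset.add_sum_erase _ _ (Finset.mem_univ j)).symm
    _ ≤ ∑ j, ‖gramBlock B j j‖ ^ 2 + ∑ j, ∑ j' ∈ Finset.univ.erase j,
          t * ∑ i, (B i j * (B i j)ᴴ * (B i j' * (B i j')ᴴ)).trace.re := by
        gcongr with j _ j' hj'
        exact norm_gramBlock_sq_le B (hcol j j' (Finset.ne_of_mem_erase hj').symm)
    _ = ∑ j, ‖gramBlock B j j‖ ^ 2 + t * ∑ i, ∑ j, ∑ j' ∈ Finset.univ.erase j,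
          (B i j * (B i j)ᴴ * (B i j' * (B i j')ᴴ)).trace.re := by
        simp only [← Finset.mul_sum]
        rw [Finset.sum_comm]
        congr 2
        exact Finset.sum_congr rfl fun j _ => Finset.sum_comm
    _ ≤ _ := by gcongr with i; exact hrow' i

lemma sqNorm_eq_norm_sq {d : ℕ} (X : Matrix (Fin d) (Fin d) ℂ) : sqNorm X = ‖X‖ ^ 2 :=
  re_trace_mul_conjTranspose_self X

lemma norm_rowSum_sub_one_sq_le_dsDist (B : Fin m → Fin n → Matrix (Fin r) (Fin c) ℂ)
    (i : Fin m) : ‖RowSum B i - 1‖ ^ 2 ≤ dsDist B := by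
  simp only [dsDist, sqNorm_eq_norm_sq]
  exact le_add_of_nonneg_of_le (by positivity)
    (Finset.single_le_sum (f := fun i => ‖RowSum B i - 1‖ ^ 2) (fun i _ => by positivity)
      (Finset.mem_univ i))

lemma norm_colSum_sub_one_sq_le_dsDist (B : Fin m → Fin n → Matrix (Fin r) (Fin c) ℂ)
    (j : Fin n) : ‖ColSum B j - 1‖ ^ 2 ≤ dsDist B := by
  simp only [dsDist, sqNorm_eq_norm_sq]
  exact le_add_of_le_of_nonneg
    (Finset.single_le_sum (f := fun j => ‖ColSum B j - 1‖ ^ 2) (fun j _ => by positivity)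
      (Finset.mem_univ j)) (by positivity)

lemma Scalable.exists_seq_tendsto {A : Fin m → Fin n → Matrix (Fin r) (Fin c) ℂ}
    (h : Scalable A) : ∃ B : ℕ → Fin m → Fin n → Matrix (Fin r) (Fin c) ℂ,
      (∀ k, IsScaling A (B k)) ∧
        Tendsto (fun k => (RowSum (B k), ColSum (B k))) atTop (𝓝 (1, 1)) := by
  choose B hB hds using fun k : ℕ => h ((1 / ((k : ℝ) + 1)) ^ 2) (by positivity)
  refine ⟨B, hB, .prodMk_nhds (tendsto_pi_nhds.2 fun i => ?_) (tendsto_pi_nhds.2 fun j => ?_)⟩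
  · exact tendsto_of_norm_sub_sq_le fun k => (norm_rowSum_sub_one_sq_le_dsDist _ i).trans (hds k)
  · exact tendsto_of_norm_sub_sq_le fun k => (norm_colSum_sub_one_sq_le_dsDist _ j).trans (hds k)

lemma gramBlock_self_eq_smul_colSum (hm : 0 < m) (hn : 0 < n) (hr : 0 < r) (hc : 0 < c)
    (B : Fin m → Fin n → Matrix (Fin r) (Fin c) ℂ) (j : Fin n) :
    gramBlock B j j = ((m * r / (n * c) : ℝ) : ℂ) • ColSum B j := by
  rw [ColSum, smul_smul, gramBlock]
  convert (one_smul ℂ _).symm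
  push_cast
  field_simp

lemma sq_sum_re_trace_rowSum_le_of_isScaling {q t : ℕ}
    {M B : Fin m → Fin n → Matrix (Fin r) (Fin c) ℂ}
    (hrow : ∀ i, {j | M i j ≠ 0}.ncard ≤ q)
    (hcol : ∀ j j', j ≠ j' → {i | M i j ≠ 0 ∧ M i j' ≠ 0}.ncard ≤ t) (hB : IsScaling M B) :
    (∑ i, (RowSum B i).trace.re) ^ 2 ≤ blockRank M * (∑ j, ‖gramBlock B j j‖ ^ 2 +
      t * ∑ i, (‖RowSum B i‖ ^ 2 - (RowSum B i).trace.re ^ 2 / (q * r))) := by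
  have hrowB : ∀ i, {j | B i j ≠ 0}.ncard ≤ q := fun i =>
    (Set.ncard_le_ncard fun j => mt hB.eq_zero).trans (hrow i)
  have hcolB : ∀ j j', j ≠ j' → {i | B i j ≠ 0 ∧ B i j' ≠ 0}.ncard ≤ t := fun j j' hjj' =>
    (Set.ncard_le_ncard fun i => And.imp (mt hB.eq_zero) (mt hB.eq_zero)).trans (hcol j j' hjj')
  calc (∑ i, (RowSum B i).trace.re) ^ 2
      ≤ blockRank B * ∑ j, ∑ j', ‖gramBlock B j j'‖ ^ 2 := sq_sum_re_trace_rowSum_le_blockRank_mul B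
    _ ≤ blockRank M * ∑ j, ∑ j', ‖gramBlock B j j'‖ ^ 2 := by
        gcongr; exact hB.blockRank_le
    _ ≤ _ := by gcongr; exact sum_sum_norm_gramBlock_sq_le B hrowB hcolB

theorem sq_le_blockRank_mul_of_scalable (hm : 0 < m) (hn : 0 < n) (hr : 0 < r) (hc : 0 < c)
    {q t : ℕ} {M : Fin m → Fin n → Matrix (Fin r) (Fin c) ℂ}
    (hrow : ∀ i, {j | M i j ≠ 0}.ncard ≤ q)
    (hcol : ∀ j j', j ≠ j' → {i | M i j ≠ 0 ∧ M i j' ≠ 0}.ncard ≤ t) (hM : Scalable M) :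
    ((m : ℝ) * r) ^ 2 ≤ blockRank M * (((m : ℝ) * r) ^ 2 / (n * c) + t * m * (r - r / q)) := by
  obtain ⟨B, hB, hlim⟩ := hM.exists_seq_tendsto
  set κ : ℂ := ((m * r / (n * c) : ℝ) : ℂ)
  let lhs : (Fin m → Matrix (Fin r) (Fin r) ℂ) × (Fin n → Matrix (Fin c) (Fin c) ℂ) → ℝ :=
    fun p => (∑ i, (p.1 i).trace.re) ^ 2
  let rhs : (Fin m → Matrix (Fin r) (Fin r) ℂ) × (Fin n → Matrix (Fin c) (Fin c) ℂ) → ℝ :=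
    fun p => blockRank M * (∑ j, ‖κ • p.2 j‖ ^ 2 +
      t * ∑ i, (‖p.1 i‖ ^ 2 - (p.1 i).trace.re ^ 2 / (q * r)))
  have hk : ∀ k, lhs (RowSum (B k), ColSum (B k)) ≤ rhs (RowSum (B k), ColSum (B k)) := fun k => by
    simpa only [gramBlock_self_eq_smul_colSum hm hn hr hc] using
      sq_sum_re_trace_rowSum_le_of_isScaling hrow hcol (hB k)
  have hlimit := le_of_tendsto_of_tendsto' (((by fun_prop : Continuous lhs).tendsto _).comp hlim)
    (((by fun_prop : Continuous rhs).tendsto _).comp hlim) hk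
  simp only [lhs, rhs, κ, Pi.one_apply, norm_smul, mul_pow, frobenius_norm_one_sq, trace_one,
    Fintype.card_fin, Finset.sum_const, Finset.card_univ, nsmul_eq_mul, Complex.natCast_re,
    Complex.norm_real, Real.norm_eq_abs, sq_abs] at hlimit
  calc ((m : ℝ) * r) ^ 2 = m ^ 2 * r ^ 2 := by ring
    _ ≤ _ := hlimit
    _ = _ := by
      rw [sq (r : ℝ), mul_div_mul_right _ _ (by positivity)]
      field_simp

end BlockMatrix

/-- Lemma 3.8: rank bound for scalable design matrices. -/
theorem rank_scalable_design {m n r c q k t : ℕ}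
    (hm : 0 < m) (hn : 0 < n) (hr : 0 < r) (hc : 0 < c)
    (hq : 2 ≤ q) (ht : 1 ≤ t)
    (M : Fin m → Fin n → Matrix (Fin r) (Fin c) ℂ)
    (hM : IsDesign q k t M) (hscal : Scalable M) :
    (n : ℝ) * c - (n : ℝ) * c /
        (1 + (m : ℝ) * r * q / ((c : ℝ) * n * t * ((q : ℝ) - 1)))
      ≤ (blockRank M : ℝ) := by
  obtain ⟨hrow, -, hcol⟩ := hM
  have hq' : (1 : ℝ) < q := by exact_mod_cast hq
  have ht' : (0 : ℝ) < t := by exact_mod_cast ht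
  have hs : (0 : ℝ) < t * (q - 1) / q := div_pos (mul_pos ht' (sub_pos.2 hq')) (by positivity)
  have hsq := sq_le_blockRank_mul_of_scalable hm hn hr hc hrow hcol hscal
  have hbound := sub_div_one_add_div_le_of_sq_le (K := blockRank M)
    (by positivity : (0 : ℝ) < m * r) (by positivity : (0 : ℝ) < n * c) hs
    (by convert hsq using 3; field_simp)
  convert hbound using 4
  field_simp
end
end
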